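/- Let (Q,I) be a special biserial bound quiver, let a, b be simple cycles at the same vertex x with no common arrow such that the last arrow of a composed with its first arrow lies in I, and suppose there is a binomial relation of the form (ab)^n - λ(ba)^m in I with n, m ≥ 1. Then n = m. -/

import Mathlib

open Classical

noncomputable section

/-- A finite quiver: finite sets of vertices and arrows with source and target maps. -/
structure FQuiver where
  V : Type
  A : Type
  [fintV : Fintype V]
  [decV : DecidableEq V]
  [fintA : Fintype A]
  [decA : DecidableEq A]
  src : A → V
  tgt : A → V

attribute [instance] FQuiver.fintV FQuiver.decV FQuiver.fintA FQuiver.decA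

namespace FQuiver

variable {Q : FQuiver}

/-- Oriented paths in a quiver. -/
inductive Path (Q : FQuiver) : Q.V → Q.V → Type
  | nil (v : Q.V) : Path Q v v
  | cons (a : Q.A) {w : Q.V} (p : Path Q (Q.tgt a) w) : Path Q (Q.src a) w

/-- Composition (concatenation) of paths. -/
def Path.comp : ∀ {u v w : Q.V}, Path Q u v → Path Q v w → Path Q u w
  | _, _, _, .nil _, q => q
  | _, _, _, .cons a p, q => .cons a (Path.comp p q)

/-- Length of a path. -/
def Path.length : ∀ {u v : Q.V}, Path Q u v → ℕ
  | _, _, .nil _ => 0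
  | _, _, .cons _ p => Path.length p + 1

/-- The list of arrows of a path, in order. -/
def Path.arrows : ∀ {u v : Q.V}, Path Q u v → List Q.A
  | _, _, .nil _ => []
  | _, _, .cons a p => a :: Path.arrows p

/-- An arrow regarded as a path of length one. -/
def arrow (Q : FQuiver) (a : Q.A) : Path Q (Q.src a) (Q.tgt a) := .cons a (.nil _)

/-- Power of an oriented cycle. -/
def Path.pow {x : Q.V} (c : Path Q x x) : ℕ → Path Q x x
  | 0 => .nil x
  | n + 1 => c.comp (Path.pow c n)

/-- Transport a path along equalities of its endpoints. -/
def Path.cast {u u' v v' : Q.V} (hu : u = u') (hv : v = v') (p : Path Q u v) :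
    Path Q u' v' := by subst hu; subst hv; exact p

/-- The length-two path `ab` formed by two composable arrows. -/
def comp2 (a b : Q.A) (h : Q.src b = Q.tgt a) : Path Q (Q.src a) (Q.tgt b) :=
  (arrow Q a).comp ((arrow Q b).cast h rfl)

/-- The set of all paths of a quiver, bundled with their endpoints. -/
def PathsSigma (Q : FQuiver) : Type := Σ (u : Q.V) (v : Q.V), Path Q u v

/-- The underlying vector space of the path algebra `kQ`: the free `k`-module on paths. -/
abbrev PAlg (k : Type) [Field k] (Q : FQuiver) : Type := PathsSigma Q →₀ k

/-- The basis vector of `kQ` corresponding to a path. -/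
def pvec (k : Type) [Field k] {u v : Q.V} (p : Path Q u v) : PAlg k Q :=
  Finsupp.single ⟨u, v, p⟩ 1

/-- Left multiplication of an element of `kQ` by a path. -/
def lmul (k : Type) [Field k] {u v : Q.V} (p : Path Q u v) (x : PAlg k Q) : PAlg k Q :=
  x.sum fun s c => if h : s.1 = v then c • pvec k (p.comp ((Sigma.snd (Sigma.snd s)).cast h rfl)) else 0

/-- Right multiplication of an element of `kQ` by a path. -/
def rmul (k : Type) [Field k] {u v : Q.V} (x : PAlg k Q) (p : Path Q u v) : PAlg k Q :=
  x.sum fun s c => if h : s.2.1 = u then c • pvec k (Path.comp ((Sigma.snd (Sigma.snd s)).cast rfl h) p) else 0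

/-- The two-sided ideal of `kQ` generated by a set of elements. -/
def idealGen (k : Type) [Field k] (Q : FQuiver) (s : Set (PAlg k Q)) : Submodule k (PAlg k Q) :=
  sInf {M : Submodule k (PAlg k Q) |
    s ⊆ (M : Set (PAlg k Q)) ∧
    ∀ (u v : Q.V) (p : Path Q u v) (x : PAlg k Q), x ∈ M → lmul k p x ∈ M ∧ rmul k x p ∈ M}

/-- An admissible (two-sided) ideal `(kQ⁺)ᵐ ⊆ I ⊆ (kQ⁺)²` of the path algebra. -/
structure AdmissibleIdeal (k : Type) [Field k] (Q : FQuiver) where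
  I : Submodule k (PAlg k Q)
  lmul_mem : ∀ {u v : Q.V} (p : Path Q u v) {x : PAlg k Q}, x ∈ I → lmul k p x ∈ I
  rmul_mem : ∀ {u v : Q.V} (p : Path Q u v) {x : PAlg k Q}, x ∈ I → rmul k x p ∈ I
  bound : ℕ
  two_le_bound : 2 ≤ bound
  pow_le : ∀ {u v : Q.V} (p : Path Q u v), bound ≤ p.length → pvec k p ∈ I
  le_sq : ∀ x ∈ I, ∀ s ∈ x.support, 2 ≤ (Sigma.snd (Sigma.snd s)).length

/-- A special biserial bound quiver `(Q, I)`. -/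
structure SpecialBiserial (k : Type) [Field k] (Q : FQuiver) extends AdmissibleIdeal k Q where
  src_card : ∀ v : Q.V, Fintype.card {a : Q.A // Q.src a = v} ≤ 2
  tgt_card : ∀ v : Q.V, Fintype.card {a : Q.A // Q.tgt a = v} ≤ 2
  unique_succ : ∀ (a b c : Q.A) (hb : Q.src b = Q.tgt a) (hc : Q.src c = Q.tgt a),
      pvec k (comp2 a b hb) ∉ I → pvec k (comp2 a c hc) ∉ I → b = c
  unique_pred : ∀ (a b c : Q.A) (hb : Q.tgt b = Q.src a) (hc : Q.tgt c = Q.src a),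
      pvec k (comp2 b a hb.symm) ∉ I → pvec k (comp2 c a hc.symm) ∉ I → b = c

/-- A binomial relation `u - λv ∈ I` between distinct parallel paths not in `I`. -/
structure BinRel {k : Type} [Field k] {Q : FQuiver} (J : AdmissibleIdeal k Q) where
  s : Q.V
  t : Q.V
  u : Path Q s t
  v : Path Q s t
  coef : k
  coef_ne : coef ≠ 0
  u_ne_v : u ≠ v
  u_not_mem : pvec k u ∉ J.I
  v_not_mem : pvec k v ∉ J.I
  rel_mem : pvec k u - coef • pvec k v ∈ J.I

/-- `I` is generated by a set of paths (monomial relations) together with the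
binomial relations in `R`. -/
def Generates {k : Type} [Field k] {Q : FQuiver} (J : AdmissibleIdeal k Q)
    (R : Set (BinRel J)) : Prop :=
  ∃ P : Set (PathsSigma Q),
    (∀ s ∈ P, pvec k (Sigma.snd (Sigma.snd s)) ∈ J.I) ∧
    J.I = idealGen k Q
      (((fun s : PathsSigma Q => pvec k (Sigma.snd (Sigma.snd s))) '' P) ∪
       ((fun r : BinRel J => pvec k r.u - r.coef • pvec k r.v) '' R))

/-- The ideal `S ⊆ A = kQ/I`: the span of the residue classes of the paths occurring
in the binomial relations of `R`. -/
def Smod {k : Type} [Field k] {Q : FQuiver} (J : AdmissibleIdeal k Q) (R : Set (BinRel J)) :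
    Submodule k (PAlg k Q ⧸ J.I) :=
  Submodule.span k
    ((fun r : BinRel J => (Submodule.Quotient.mk (pvec k r.u) : PAlg k Q ⧸ J.I)) '' R)

/-- Number of connected components of the underlying graph of `Q`. -/
def numComponents (Q : FQuiver) : ℕ :=
  Nat.card (Quot (fun u v : Q.V => ∃ a : Q.A, Q.src a = u ∧ Q.tgt a = v))

/-- A quiver is acyclic (triangular) if it has no nontrivial oriented cycle. -/
def Acyclic (Q : FQuiver) : Prop := ∀ (x : Q.V) (p : Path Q x x), p.length = 0

/-- A simple cycle: a nontrivial oriented cycle visiting no vertex twice. -/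
def IsSimpleCycle {x : Q.V} (p : Path Q x x) : Prop :=
  p.length ≠ 0 ∧ (p.arrows.map Q.src).Nodup

/-- `dim_k S = χ(Q)`, written additively: `dim S + |Q₀| = |Q₁| + N`. -/
def EulerEq {k : Type} [Field k] {Q : FQuiver} (J : AdmissibleIdeal k Q)
    (R : Set (BinRel J)) : Prop :=
  Module.finrank k ↥(Smod J R) + Fintype.card Q.V = Fintype.card Q.A + numComponents Q

/-- The word in the free group on the arrows determined by a path. -/
def pathWord (Q : FQuiver) {u v : Q.V} (p : Path Q u v) : FreeGroup Q.A :=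
  (p.arrows.map FreeGroup.of).prod

/-- `T` is a spanning tree of (the underlying graph of) `Q`. -/
def IsSpanningTree (Q : FQuiver) (T : Set Q.A) : Prop :=
  (∀ u v : Q.V,
      Quot.mk (fun a b : Q.V => ∃ e ∈ T, Q.src e = a ∧ Q.tgt e = b) u =
      Quot.mk (fun a b : Q.V => ∃ e ∈ T, Q.src e = a ∧ Q.tgt e = b) v) ∧
  Nat.card T + 1 = Fintype.card Q.V

/-- The fundamental group of the bound quiver `(Q, I)` (for connected `Q`,
with respect to a spanning tree `T`): the free group on the arrows modulo the
tree arrows and the homotopy relations coming from the binomial relations. -/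
abbrev pi1 {k : Type} [Field k] {Q : FQuiver} (J : AdmissibleIdeal k Q)
    (T : Set Q.A) (R : Set (BinRel J)) : Type :=
  FreeGroup Q.A ⧸ Subgroup.normalClosure
    ((FreeGroup.of '' T) ∪
     ((fun r : BinRel J => pathWord Q r.u * (pathWord Q r.v)⁻¹) '' R))

end FQuiver

/-!
Multiplying the relation `(ab)ⁿ - λ(ba)ᵐ` on the left by `a` kills `a(ab)ⁿ`, which contains the
zero relation `alr al1`; hence `a(ba)ᵐ = (ab)ᵐa ∈ I`, and for `m < n` this path is a prefix of
`(ab)ⁿ`, forcing `(ab)ⁿ ∈ I`. For `n < m`, the last arrow of `b` followed by `al1` occurs in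
`(ba)ᵐ ∉ I`; since `al1` is not the first arrow of `b`, special biseriality puts `bb` into `I`,
and the same argument with `a` and `b` exchanged gives `(ba)ᵐ ∈ I`.
-/

theorem List.infix_append_of_getLast?_of_head? {α : Type*} {l₁ l₂ : List α} {x y : α}
    (h₁ : l₁.getLast? = some x) (h₂ : l₂.head? = some y) : [x, y] <:+: l₁ ++ l₂ := by
  obtain ⟨l₁, rfl⟩ := List.getLast?_eq_some_iff.mp h₁
  obtain ⟨l₂, rfl⟩ := List.head?_eq_some_iff.mp h₂
  exact ⟨l₁, l₂, by simp⟩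

theorem Submodule.sub_smul_mem_symm {K M : Type*} [Field K] [AddCommGroup M] [Module K M]
    (N : Submodule K M) {u v : M} {c : K} (hc : c ≠ 0) (h : u - c • v ∈ N) :
    v - c⁻¹ • u ∈ N := by
  have h' : v - c⁻¹ • u = (-c⁻¹) • (u - c • v) := by
    rw [smul_sub, smul_smul, neg_mul, inv_mul_cancel₀ hc]
    module
  exact h' ▸ N.smul_mem _ h

namespace FQuiver

variable {Q : FQuiver}

namespace Path

theorem comp_nil : ∀ {u v : Q.V} (p : Path Q u v), p.comp (.nil v) = p
  | _, _, .nil _ => rfl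
  | _, _, .cons a p => congrArg (cons a) (comp_nil p)

theorem comp_assoc : ∀ {u v w z : Q.V} (p : Path Q u v) (q : Path Q v w) (r : Path Q w z),
    (p.comp q).comp r = p.comp (q.comp r)
  | _, _, _, _, .nil _, _, _ => rfl
  | _, _, _, _, .cons a p, q, r => congrArg (cons a) (comp_assoc p q r)

theorem arrows_comp : ∀ {u v w : Q.V} (p : Path Q u v) (q : Path Q v w),
    (p.comp q).arrows = p.arrows ++ q.arrows
  | _, _, _, .nil _, _ => rfl
  | _, _, _, .cons a p, q => congrArg (a :: ·) (arrows_comp p q)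

theorem arrows_cast {u u' v v' : Q.V} (hu : u = u') (hv : v = v') (p : Path Q u v) :
    (p.cast hu hv).arrows = p.arrows := by
  subst hu hv; rfl

theorem length_arrows : ∀ {u v : Q.V} (p : Path Q u v), p.arrows.length = p.length
  | _, _, .nil _ => rfl
  | _, _, .cons _ p => congrArg (· + 1) (length_arrows p)

theorem eq_cast_cons_of_head? : ∀ {u v : Q.V} (p : Path Q u v) {e : Q.A},
    p.arrows.head? = some e →
      ∃ (he : Q.src e = u) (p' : Path Q (Q.tgt e) v), p = (cons e p').cast he rfl
  | _, _, .nil _, _, h => nomatch h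
  | _, _, .cons _ p, _, h => by cases h; exact ⟨rfl, p, rfl⟩

theorem exists_eq_comp_of_prefix {t : Q.V} :
    ∀ {s v : Q.V} (q : Path Q s t) (p : Path Q s v), q.arrows <+: p.arrows →
      ∃ r : Path Q t v, p = q.comp r
  | _, _, .nil _, p, _ => ⟨p, rfl⟩
  | _, _, .cons f q, p, ⟨l, hl⟩ => by
    obtain ⟨_, p, rfl⟩ := p.eq_cast_cons_of_head? (e := f) (by rw [← hl]; rfl)
    obtain ⟨r, rfl⟩ := exists_eq_comp_of_prefix q p (List.cons_prefix_cons.mp ⟨l, hl⟩).2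
    exact ⟨r, rfl⟩

theorem src_eq_tgt_of_infix {e f : Q.A} :
    ∀ {u v : Q.V} (p : Path Q u v), [e, f] <:+: p.arrows → Q.src f = Q.tgt e
  | _, _, .nil _, h => nomatch List.eq_nil_of_infix_nil h
  | _, _, .cons a p, h => by
    rcases List.infix_cons_iff.mp h with ⟨l, hl⟩ | h
    · obtain ⟨rfl, hl⟩ := List.cons.inj hl
      exact (p.eq_cast_cons_of_head? (by rw [← hl]; rfl)).1
    · exact src_eq_tgt_of_infix p h

theorem arrows_comp2 (e f : Q.A) (h : Q.src f = Q.tgt e) : (comp2 e f h).arrows = [e, f] := by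
  simp only [comp2, arrow, arrows_comp, arrows_cast, arrows, List.cons_append, List.nil_append]

section Pow

variable {x : Q.V}

theorem pow_succ (c : Path Q x x) (n : ℕ) : c.pow (n + 1) = c.comp (c.pow n) := rfl

theorem pow_add (c : Path Q x x) (i j : ℕ) : c.pow (i + j) = (c.pow i).comp (c.pow j) := by
  induction i with
  | zero => rw [Nat.zero_add]; rfl
  | succ i ih => rw [Nat.succ_add, pow_succ, pow_succ, ih, comp_assoc]

theorem comp_pow_comp (p q : Path Q x x) (n : ℕ) :
    ((p.comp q).pow n).comp p = p.comp ((q.comp p).pow n) := by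
  induction n with
  | zero => exact (comp_nil p).symm
  | succ n ih => rw [pow_succ, pow_succ, comp_assoc, ih, comp_assoc, comp_assoc]

end Pow

end Path

section Multiplication

variable {k : Type} [Field k]

theorem lmul_pvec {u v w : Q.V} (p : Path Q u v) (q : Path Q v w) :
    lmul k p (pvec k q) = pvec k (p.comp q) := by
  unfold lmul pvec
  refine (Finsupp.sum_single_index ?_).trans ?_
  · rw [dif_pos rfl, zero_smul]
  · rw [dif_pos rfl, one_smul]
    rfl

theorem rmul_pvec {u v w : Q.V} (p : Path Q u v) (q : Path Q w u) :
    rmul k (pvec k q) p = pvec k (q.comp p) := by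
  unfold rmul pvec
  refine (Finsupp.sum_single_index ?_).trans ?_
  · rw [dif_pos rfl, zero_smul]
  · rw [dif_pos rfl, one_smul]
    rfl

theorem lmul_add {u v : Q.V} (p : Path Q u v) (y z : PAlg k Q) :
    lmul k p (y + z) = lmul k p y + lmul k p z := by
  unfold lmul
  apply Finsupp.sum_add_index'
  · intro s; split <;> simp
  · intro s b₁ b₂; split <;> simp [add_smul]

theorem lmul_smul {u v : Q.V} (p : Path Q u v) (c : k) (y : PAlg k Q) :
    lmul k p (c • y) = c • lmul k p y := by
  unfold lmul
  rw [Finsupp.smul_sum, Finsupp.sum_smul_index' (fun s => by split <;> simp)]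
  congr 1
  funext s d
  split <;> simp [smul_smul]

theorem lmul_sub_smul {u v w : Q.V} (p : Path Q u v) (q r : Path Q v w) (c : k) :
    lmul k p (pvec k q - c • pvec k r) = pvec k (p.comp q) - c • pvec k (p.comp r) := by
  rw [sub_eq_add_neg, ← neg_smul, lmul_add, lmul_smul, lmul_pvec, lmul_pvec, neg_smul,
    ← sub_eq_add_neg]

end Multiplication

namespace AdmissibleIdeal

variable {k : Type} [Field k] (J : AdmissibleIdeal k Q)

theorem nil_not_mem (v : Q.V) : pvec k (Path.nil v : Path Q v v) ∉ J.I := fun h => by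
  have h2 := J.le_sq _ h (⟨v, v, .nil v⟩ : PathsSigma Q) (by
    change _ ∈ (Finsupp.single (⟨v, v, .nil v⟩ : PathsSigma Q) (1 : k)).support
    simp)
  simp [Path.length] at h2

theorem comp_mem_left {u v w : Q.V} (p : Path Q u v) {q : Path Q v w} (h : pvec k q ∈ J.I) :
    pvec k (p.comp q) ∈ J.I :=
  lmul_pvec (k := k) p q ▸ J.lmul_mem p h

theorem comp_mem_right {u v w : Q.V} {p : Path Q u v} (r : Path Q v w) (h : pvec k p ∈ J.I) :
    pvec k (p.comp r) ∈ J.I :=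
  rmul_pvec (k := k) r p ▸ J.rmul_mem r h

theorem mem_of_infix {s t : Q.V} {q : Path Q s t} (hq : pvec k q ∈ J.I) :
    ∀ {u v : Q.V} (p : Path Q u v), q.arrows <:+: p.arrows → pvec k p ∈ J.I := by
  cases q with
  | nil => exact absurd hq (J.nil_not_mem _)
  | cons f q =>
    intro u v p h
    induction p with
    | nil => exact nomatch List.eq_nil_of_infix_nil h
    | cons e p ih =>
      rcases List.infix_cons_iff.mp h with ⟨l, hl⟩ | h
      · obtain ⟨rfl, -⟩ := List.cons.inj hl
        obtain ⟨r, hr⟩ := Path.exists_eq_comp_of_prefix (.cons f q) (.cons f p) ⟨l, hl⟩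
        exact hr ▸ J.comp_mem_right r hq
      · exact J.comp_mem_left (arrow Q e) (ih h)

theorem comp_mem_of_comp2_mem {u v w : Q.V} {p : Path Q u v} {q : Path Q v w} {e f : Q.A}
    (he : p.arrows.getLast? = some e) (hf : q.arrows.head? = some f) {h : Q.src f = Q.tgt e}
    (hef : pvec k (comp2 e f h) ∈ J.I) : pvec k (p.comp q) ∈ J.I :=
  J.mem_of_infix hef _ (by
    rw [Path.arrows_comp2, Path.arrows_comp]
    exact List.infix_append_of_getLast?_of_head? he hf)

theorem pow_mem {x : Q.V} {c : Path Q x x} (hc : pvec k c ∈ J.I) {n : ℕ} (hn : n ≠ 0) :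
    pvec k (c.pow n) ∈ J.I := by
  obtain ⟨n, rfl⟩ := Nat.exists_eq_succ_of_ne_zero hn
  exact J.comp_mem_right _ hc

theorem pow_comp_mem_of_lt {x : Q.V} {p q : Path Q x x} (hpp : pvec k (p.comp p) ∈ J.I)
    {n m : ℕ} (hmn : m < n) {c : k} (hc : c ≠ 0)
    (hrel : pvec k ((p.comp q).pow n) - c • pvec k ((q.comp p).pow m) ∈ J.I) :
    pvec k ((p.comp q).pow n) ∈ J.I := by
  obtain ⟨d, rfl⟩ := Nat.exists_eq_add_of_lt hmn
  have hleft : pvec k (p.comp ((p.comp q).pow (m + d + 1))) ∈ J.I := by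
    have hsplit : p.comp ((p.comp q).pow (m + d + 1)) =
        (p.comp p).comp (q.comp ((p.comp q).pow (m + d))) := by
      simp only [Path.pow_succ, Path.comp_assoc]
    exact hsplit ▸ J.comp_mem_right _ hpp
  have hshift : pvec k (((p.comp q).pow m).comp p) ∈ J.I := by
    have h := J.lmul_mem p hrel
    rw [lmul_sub_smul, ← Path.comp_pow_comp] at h
    rw [← J.I.smul_mem_iff hc]
    simpa using J.I.sub_mem hleft h
  have hsplit : (p.comp q).pow (m + d + 1) =
      (((p.comp q).pow m).comp p).comp (q.comp ((p.comp q).pow d)) := by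
    rw [add_assoc, Path.pow_add, Path.pow_succ]
    simp only [Path.comp_assoc]
  exact hsplit ▸ J.comp_mem_right _ hshift

end AdmissibleIdeal

theorem SpecialBiserial.head_eq_of_comp_not_mem {k : Type} [Field k] (SB : SpecialBiserial k Q)
    {u v w w' : Q.V} {p : Path Q u v} {q : Path Q v w} {r : Path Q v w'} {e f g : Q.A}
    (he : p.arrows.getLast? = some e) (hf : q.arrows.head? = some f)
    (hg : r.arrows.head? = some g)
    (hq : pvec k (p.comp q) ∉ SB.I) (hr : pvec k (p.comp r) ∉ SB.I) : f = g := by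
  have src_eq {w'' : Q.V} (s : Path Q v w'') {f' : Q.A} (hf' : s.arrows.head? = some f') :
      Q.src f' = Q.tgt e :=
    Path.src_eq_tgt_of_infix (p.comp s)
      (Path.arrows_comp p s ▸ List.infix_append_of_getLast?_of_head? he hf')
  exact SB.unique_succ e f g (src_eq q hf) (src_eq r hg)
    (fun h => hq (SB.comp_mem_of_comp2_mem he hf h))
    (fun h => hr (SB.comp_mem_of_comp2_mem he hg h))

/-- if `a`, `b` are simple cycles at `x` without common arrow, the
composite of the last and first arrows of `a` lies in `I`, and
`(ab)ⁿ - λ(ba)ᵐ ∈ I` is a binomial relation with `n, m ≥ 1`, then `n = m`. -/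
theorem stmt4 {k : Type} [Field k] {Q : FQuiver} (SB : SpecialBiserial k Q)
    {x : Q.V} (a b : Path Q x x) (hb : IsSimpleCycle b)
    (hdisj : ∀ e : Q.A, e ∈ a.arrows → e ∉ b.arrows)
    (al1 alr : Q.A)
    (ha1 : a.arrows.head? = some al1) (har : a.arrows.getLast? = some alr)
    (hsa1 : Q.src al1 = x) (htar : Q.tgt alr = x)
    (hmem : pvec k (comp2 alr al1 (by rw [hsa1, htar])) ∈ SB.I)
    (n m : ℕ) (c : k) (hc : c ≠ 0)
    (hu : pvec k ((a.comp b).pow n) ∉ SB.I)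
    (hv : pvec k ((b.comp a).pow m) ∉ SB.I)
    (hrel : pvec k ((a.comp b).pow n) - c • pvec k ((b.comp a).pow m) ∈ SB.I) :
    n = m := by
  rcases lt_trichotomy n m with hnm | rfl | hmn
  · have hb_ne : b.arrows ≠ [] := fun h => hb.1 (by rw [← Path.length_arrows, h]; rfl)
    obtain ⟨bl1, hb1⟩ := Option.ne_none_iff_exists'.mp (mt List.head?_eq_none_iff.mp hb_ne)
    obtain ⟨blr, hbr⟩ := Option.ne_none_iff_exists'.mp (mt List.getLast?_eq_none_iff.mp hb_ne)
    have hba : pvec k (b.comp a) ∉ SB.I := fun h => hv (SB.pow_mem h (by omega))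
    have hbb : pvec k (b.comp b) ∈ SB.I := by
      by_contra hbb
      have hfirst : al1 = bl1 := SB.head_eq_of_comp_not_mem hbr ha1 hb1 hba hbb
      exact hdisj al1 (List.mem_of_mem_head? ha1) (hfirst ▸ List.mem_of_mem_head? hb1)
    exact absurd (SB.pow_comp_mem_of_lt hbb hnm (inv_ne_zero hc)
      (SB.I.sub_smul_mem_symm hc hrel)) hv
  · rfl
  · exact absurd (SB.pow_comp_mem_of_lt (SB.comp_mem_of_comp2_mem har ha1 hmem) hmn hc hrel) hu

end FQuiver
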